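/- Let X ⊂ ℝⁿ be a regular convex set, f : int X → ℝ a C³ projectively self-concordant barrier with parameter γ = (ν−2)/√(ν−1), ν ≥ 2, and x ∈ int X. Define σ_x(h) = inf{ 1/t : t > 0, x + th ∈ X }. Then for every h ∈ ℝⁿ: max(0, f'(x)[h] + √(G(x)[h,h]/(ν−1))) ≤ σ_x(h) ≤ max(0, f'(x)[h] + √((ν−1)·G(x)[h,h])), where G(x) = f''(x) − f'(x)f'(x)ᵀ. -/

import Mathlib

open Filter

variable {E : Type*} [NormedAddCommGroup E] [NormedSpace ℝ E]

/-- A regular convex set: closed, convex, with nonempty interior, containing no lines. -/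
def IsRegularConvex (X : Set E) : Prop :=
  IsClosed X ∧ Convex ℝ X ∧ (interior X).Nonempty ∧
    ∀ x d : E, d ≠ 0 → ¬ (∀ t : ℝ, x + t • d ∈ X)

/-- Affine metric `G(x)[h,h] = f''(x)[h,h] - (f'(x)[h])²`. -/
noncomputable def affMetric (f : E → ℝ) (x h : E) : ℝ :=
  iteratedFDeriv ℝ 2 f x (fun _ => h) - (fderiv ℝ f x h)^2

/-- Cubic form `C(x)[h,h,h]`. -/
noncomputable def cubicForm (f : E → ℝ) (x h : E) : ℝ :=
  iteratedFDeriv ℝ 3 f x (fun _ => h)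
    - 6 * iteratedFDeriv ℝ 2 f x (fun _ => h) * fderiv ℝ f x h
    + 4 * (fderiv ℝ f x h)^3

/-- Projectively self-concordant barrier with parameter γ on X. -/
def IsPSCBarrier (X : Set E) (f : E → ℝ) (γ : ℝ) : Prop :=
  ContDiffOn ℝ 3 f (interior X) ∧
  (∀ x ∈ interior X, ∀ h : E, h ≠ 0 → 0 < affMetric f x h) ∧
  (∀ x ∈ frontier X, Tendsto f (nhdsWithin x (interior X)) atTop) ∧
  (∀ x ∈ interior X, ∀ h : E, |cubicForm f x h| ≤ 2 * γ * (affMetric f x h) ^ ((3:ℝ)/2))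

/-- `σ_x(h) = inf { 1/t : t > 0, x + t•h ∈ X }`. -/
noncomputable def sigmaDist (X : Set E) (x h : E) : ℝ :=
  sInf {r : ℝ | ∃ t : ℝ, 0 < t ∧ x + t • h ∈ X ∧ r = 1/t}

/-! Along the ray `t ↦ x + t • h` put `p = f'[h]`, `G = G[h,h]` and `F_r = p + r √G`. Then
`F_r' - F_r² = (1 - r²) G + r C / (2 √G)` with `|C| ≤ 2 γ G^{3/2}`, so `F_r' ≥ F_r²` for
`r = 1/√(ν-1)` and `F_r' ≤ F_r²` for `r = √(ν-1)`. Compare with the Riccati equation `y' = y²`,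
whose solutions `1/(c - t)` blow up at time `c`. A supersolution cannot live longer than `1/F_r(0)`,
so `F_r(0) ≤ 1/t` whenever `[0, t)` lies in the interior, i.e. whenever `x + t h ∈ X`. When the ray
leaves `X` at time `T = 1/σ_x(h)`, the barrier makes `p`, hence `F_r`, unbounded on `[0, T)`, and
this is only possible for the subsolution if `F_r(0) ≥ 1/T`. -/

open Set Topology

section Riccati

theorem le_inv_of_sq_le_deriv {F : ℝ → ℝ} {T : ℝ} (hT : 0 < T)
    (hF : ∀ t ∈ Ico 0 T, DifferentiableAt ℝ F t) (hsq : ∀ t ∈ Ico 0 T, F t ^ 2 ≤ deriv F t) :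
    F 0 ≤ T⁻¹ := by
  by_contra! hlt
  have hint : ∀ t ∈ interior (Ico 0 T), t ∈ Ico 0 T := fun t ht => interior_subset ht
  have hcont : ContinuousOn F (Ico 0 T) := fun t ht => (hF t ht).continuousAt.continuousWithinAt
  have hmono : MonotoneOn F (Ico 0 T) :=
    monotoneOn_of_hasDerivWithinAt_nonneg (convex_Ico 0 T) hcont
      (fun t ht => (hF t (hint t ht)).hasDerivAt.hasDerivWithinAt)
      (fun t ht => (sq_nonneg _).trans (hsq t (hint t ht)))
  have hpos : ∀ t ∈ Ico 0 T, 0 < F t := fun t ht =>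
    (inv_pos.2 hT).trans (hlt.trans_le (hmono ⟨le_rfl, hT⟩ ht ht.1))
  -- `(1 / F)' = -F' / F² ≤ -1`
  have hanti : AntitoneOn (fun t => t + (F t)⁻¹) (Ico 0 T) :=
    antitoneOn_of_hasDerivWithinAt_nonpos (convex_Ico 0 T)
      (continuousOn_id.add (hcont.inv₀ fun t ht => (hpos t ht).ne'))
      (fun t ht => ((hasDerivAt_id t).add
        ((hF t (hint t ht)).hasDerivAt.inv (hpos t (hint t ht)).ne')).hasDerivWithinAt)
      (fun t ht => by
        have h2 : 0 < F t ^ 2 := pow_pos (hpos t (hint t ht)) 2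
        have : 1 ≤ deriv F t / F t ^ 2 := (one_le_div h2).2 (hsq t (hint t ht))
        rw [neg_div]
        linarith)
  have h0 : (F 0)⁻¹ ∈ Ico 0 T :=
    ⟨(inv_pos.2 (hpos 0 ⟨le_rfl, hT⟩)).le, (inv_lt_comm₀ (hpos 0 ⟨le_rfl, hT⟩) hT).2 hlt⟩
  have := hanti ⟨le_rfl, hT⟩ h0 h0.1
  simp only [zero_add] at this
  linarith [inv_pos.2 (hpos _ h0)]

theorem inv_le_of_deriv_le_sq {F : ℝ → ℝ} {T : ℝ} (hT : 0 < T)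
    (hF : ∀ t ∈ Ico 0 T, DifferentiableAt ℝ F t) (hsq : ∀ t ∈ Ico 0 T, deriv F t ≤ F t ^ 2)
    (hunb : ¬ BddAbove (F '' Ico 0 T)) : T⁻¹ ≤ F 0 := by
  by_contra! hlt
  obtain ⟨β, hβ, hβT⟩ := exists_between (max_lt hlt (inv_pos.2 hT))
  have hβ0 : 0 < β := (le_max_right _ _).trans_lt hβ
  have hFβ : F 0 / β < 1 := (div_lt_one hβ0).2 ((le_max_left _ _).trans_lt hβ)
  obtain ⟨k, hk, hk1⟩ := exists_between (max_lt hFβ zero_lt_one)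
  have hk0 : 0 < k := (le_max_right _ _).trans_lt hk
  have hTc : T < β⁻¹ := (lt_inv_comm₀ hβ0 hT).1 hβT
  -- `F` stays below `k / (β⁻¹ - t)`, which satisfies `y' > y²` and is bounded on `[0, T)`
  refine hunb ⟨k / (β⁻¹ - T), ?_⟩
  rintro _ ⟨t, ht, rfl⟩
  have hsub : ∀ s ∈ Icc 0 t, s ∈ Ico 0 T := fun s hs => ⟨hs.1, hs.2.trans_lt ht.2⟩
  have hc : ∀ s ∈ Icc 0 t, 0 < β⁻¹ - s := fun s hs => by linarith [(hsub s hs).2]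
  have hB : ∀ s ∈ Icc 0 t, HasDerivAt (fun s => k / (β⁻¹ - s)) (k / (β⁻¹ - s) ^ 2) s :=
    fun s hs => by
      simpa [div_eq_mul_inv] using
        ((hasDerivAt_id s).const_sub β⁻¹).inv (hc s hs).ne' |>.const_mul k
  have hle := image_le_of_deriv_right_lt_deriv_boundary' (a := 0) (b := t)
    (fun s hs => (hF s (hsub s hs)).continuousAt.continuousWithinAt)
    (fun s hs => (hF s (hsub s (Ico_subset_Icc_self hs))).hasDerivAt.hasDerivWithinAt)
    (B := fun s => k / (β⁻¹ - s)) (by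
      rw [sub_zero, div_inv_eq_mul]
      nlinarith [(div_lt_iff₀ hβ0).1 ((le_max_left _ _).trans_lt hk)])
    (fun s hs => (hB s hs).continuousAt.continuousWithinAt)
    (fun s hs => (hB s (Ico_subset_Icc_self hs)).hasDerivWithinAt)
    (fun s hs heq => by
      have hs' := Ico_subset_Icc_self hs
      calc deriv F s ≤ F s ^ 2 := hsq s (hsub s hs')
        _ = k * (k / (β⁻¹ - s) ^ 2) := by rw [heq, div_pow]; ring
        _ < k / (β⁻¹ - s) ^ 2 := by
          have : 0 < k / (β⁻¹ - s) ^ 2 := by have := hc s hs'; positivity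
          nlinarith)
    ⟨ht.1, le_rfl⟩
  exact hle.trans (div_le_div_of_nonneg_left hk0.le (by linarith) (by linarith [ht.2]))

theorem not_bddAbove_deriv_of_tendsto_atTop {φ : ℝ → ℝ} {T : ℝ} (hT : 0 < T)
    (hφ : ∀ t ∈ Ico 0 T, DifferentiableAt ℝ φ t) (hlim : Tendsto φ (𝓝[<] T) atTop) :
    ¬ BddAbove (deriv φ '' Ico 0 T) := by
  rintro ⟨M, hM⟩
  have hlin : ∀ t ∈ Ico 0 T, φ t ≤ φ 0 + M * t := fun t ht =>
    image_le_of_deriv_right_le_deriv_boundary (a := 0) (b := t)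
      (fun s hs => (hφ s ⟨hs.1, hs.2.trans_lt ht.2⟩).continuousAt.continuousWithinAt)
      (fun s hs => (hφ s ⟨hs.1, hs.2.trans ht.2⟩).hasDerivAt.hasDerivWithinAt)
      (B := fun s => φ 0 + M * s) (by simp) (by fun_prop)
      (fun s _ => ((hasDerivAt_id s).const_mul M |>.const_add (φ 0)).hasDerivWithinAt)
      (fun s hs => by simpa using hM ⟨s, ⟨hs.1, hs.2.trans ht.2⟩, rfl⟩) ⟨ht.1, le_rfl⟩
  obtain ⟨t, hbig, ht⟩ :=
    ((hlim.eventually_gt_atTop (φ 0 + |M| * T)).and (Ioo_mem_nhdsLT hT)).exists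
  have : M * t ≤ |M| * T :=
    (mul_le_mul_of_nonneg_right (le_abs_self M) ht.1.le).trans
      (mul_le_mul_of_nonneg_left ht.2.le (abs_nonneg M))
  linarith [hlin t (Ioo_subset_Ico_self ht)]

end Riccati

section Line

variable {F : Type*} [NormedAddCommGroup F] [NormedSpace ℝ F]

theorem hasDerivAt_comp_add_smul {g : E → F} {x h : E} {t : ℝ}
    (hg : DifferentiableAt ℝ g (x + t • h)) :
    HasDerivAt (fun s : ℝ => g (x + s • h)) (fderiv ℝ g (x + t • h) h) t := by
  have hline : HasDerivAt (fun s : ℝ => x + s • h) h t := by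
    simpa using ((hasDerivAt_id t).smul_const h).const_add x
  exact hg.hasFDerivAt.comp_hasDerivAt t hline

theorem hasDerivAt_iteratedFDeriv_comp_add_smul {f : E → F} {x h : E} {t : ℝ} {n : WithTop ℕ∞}
    {k : ℕ} (hf : ContDiffAt ℝ n f (x + t • h)) (hk : (k : WithTop ℕ∞) < n) :
    HasDerivAt (fun s : ℝ => iteratedFDeriv ℝ k f (x + s • h) (fun _ => h))
      (iteratedFDeriv ℝ (k + 1) f (x + t • h) (fun _ => h)) t :=
  (ContinuousMultilinearMap.apply ℝ (fun _ : Fin k => E) F (fun _ => h)).hasFDerivAt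
    |>.comp_hasDerivAt t (hasDerivAt_comp_add_smul (hf.differentiableAt_iteratedFDeriv hk))

end Line

noncomputable def lineSlope (f : E → ℝ) (x h : E) (r t : ℝ) : ℝ :=
  fderiv ℝ f (x + t • h) h + r * √(affMetric f (x + t • h) h)

theorem lineSlope_zero (f : E → ℝ) (x h : E) (r : ℝ) :
    lineSlope f x h r 0 = fderiv ℝ f x h + r * √(affMetric f x h) := by
  simp [lineSlope]

theorem hasDerivAt_lineSlope {f : E → ℝ} {x h : E} {r t : ℝ} (hf : ContDiffAt ℝ 3 f (x + t • h))
    (hG : 0 < affMetric f (x + t • h) h) :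
    HasDerivAt (lineSlope f x h r)
      (lineSlope f x h r t ^ 2 + (1 - r ^ 2) * affMetric f (x + t • h) h
        + r * cubicForm f (x + t • h) h / (2 * √(affMetric f (x + t • h) h))) t := by
  have hp := hasDerivAt_iteratedFDeriv_comp_add_smul (k := 1) hf (by norm_num)
  have hA := hasDerivAt_iteratedFDeriv_comp_add_smul (k := 2) hf (by norm_num)
  simp only [iteratedFDeriv_one_apply] at hp
  set p := fderiv ℝ f (x + t • h) h
  set A := iteratedFDeriv ℝ 2 f (x + t • h) (fun _ => h)
  set B := iteratedFDeriv ℝ 3 f (x + t • h) (fun _ => h)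
  have hG' : affMetric f (x + t • h) h = A - p ^ 2 := rfl
  have hV : HasDerivAt (fun s => √(affMetric f (x + s • h) h))
      ((B - 2 * p * A) / (2 * √(affMetric f (x + t • h) h))) t :=
    ((hA.sub (hp.pow 2)).sqrt hG.ne').congr_deriv (by norm_num; rfl)
  refine (hp.add (hV.const_mul r)).congr_deriv ?_
  have hV0 : 0 < √(affMetric f (x + t • h) h) := Real.sqrt_pos.2 hG
  have hV2 := Real.sq_sqrt hG.le
  have hF : lineSlope f x h r t = p + r * √(affMetric f (x + t • h) h) := rfl
  have hC : cubicForm f (x + t • h) h = B - 6 * A * p + 4 * p ^ 3 := rfl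
  rw [hF, hC]
  set V := √(affMetric f (x + t • h) h)
  rw [hG'] at hV2 ⊢
  field_simp
  linear_combination (-4 * r * p - 2 * r ^ 2 * V) * hV2

theorem abs_mul_div_two_sqrt_le {r γ G C : ℝ} (hr : 0 ≤ r) (hG : 0 < G)
    (hC : |C| ≤ 2 * γ * G ^ ((3 : ℝ) / 2)) : |r * C / (2 * √G)| ≤ r * γ * G := by
  have hV : 0 < √G := Real.sqrt_pos.2 hG
  have h32 : G ^ ((3 : ℝ) / 2) = G * √G := by
    rw [Real.sqrt_eq_rpow, ← Real.rpow_one_add' hG.le (by norm_num)]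
    norm_num
  rw [abs_div, abs_mul, abs_of_nonneg hr, abs_of_pos (by positivity : (0 : ℝ) < 2 * √G),
    div_le_iff₀ (by positivity)]
  calc r * |C| ≤ r * (2 * γ * (G * √G)) := by rw [← h32]; gcongr
    _ = r * γ * G * (2 * √G) := by ring

namespace IsPSCBarrier

variable {X : Set E} {f : E → ℝ} {x h : E} {t : ℝ}

theorem hasDerivAt_lineSlope {γ r : ℝ} (hf : IsPSCBarrier X f γ) (hh : h ≠ 0)
    (ht : x + t • h ∈ interior X) :
    HasDerivAt (lineSlope f x h r)
      (lineSlope f x h r t ^ 2 + (1 - r ^ 2) * affMetric f (x + t • h) h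
        + r * cubicForm f (x + t • h) h / (2 * √(affMetric f (x + t • h) h))) t :=
  _root_.hasDerivAt_lineSlope (hf.1.contDiffAt (isOpen_interior.mem_nhds ht)) (hf.2.1 _ ht h hh)

theorem abs_deriv_lineSlope_sub_le {γ r : ℝ} (hf : IsPSCBarrier X f γ) (hr : 0 ≤ r) (hh : h ≠ 0)
    (ht : x + t • h ∈ interior X) :
    |deriv (lineSlope f x h r) t - lineSlope f x h r t ^ 2
      - (1 - r ^ 2) * affMetric f (x + t • h) h| ≤ r * γ * affMetric f (x + t • h) h := by
  rw [(hf.hasDerivAt_lineSlope hh ht).deriv, add_assoc, add_sub_cancel_left, add_sub_cancel_left]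
  exact abs_mul_div_two_sqrt_le hr (hf.2.1 _ ht h hh) (hf.2.2.2 _ ht h)

variable {ν : ℝ}

theorem sq_lineSlope_le_deriv (hν : 1 < ν) (hf : IsPSCBarrier X f ((ν - 2) / √(ν - 1)))
    (hh : h ≠ 0) (ht : x + t • h ∈ interior X) :
    lineSlope f x h (√(ν - 1))⁻¹ t ^ 2 ≤ deriv (lineSlope f x h (√(ν - 1))⁻¹) t := by
  have hb : 0 < √(ν - 1) := Real.sqrt_pos.2 (by linarith)
  have hb2 : √(ν - 1) ^ 2 = ν - 1 := Real.sq_sqrt (by linarith)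
  have hr : 1 - ((√(ν - 1))⁻¹) ^ 2 = (√(ν - 1))⁻¹ * ((ν - 2) / √(ν - 1)) := by
    field_simp
    linarith
  have := abs_le.1 (hf.abs_deriv_lineSlope_sub_le (inv_nonneg.2 hb.le) hh ht)
  rw [hr] at this
  linarith [this.1]

theorem deriv_lineSlope_le_sq (hν : 1 < ν) (hf : IsPSCBarrier X f ((ν - 2) / √(ν - 1)))
    (hh : h ≠ 0) (ht : x + t • h ∈ interior X) :
    deriv (lineSlope f x h √(ν - 1)) t ≤ lineSlope f x h √(ν - 1) t ^ 2 := by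
  have hb : 0 < √(ν - 1) := Real.sqrt_pos.2 (by linarith)
  have hb2 : √(ν - 1) ^ 2 = ν - 1 := Real.sq_sqrt (by linarith)
  have hr : 1 - √(ν - 1) ^ 2 = -(√(ν - 1) * ((ν - 2) / √(ν - 1))) := by
    field_simp
    linarith
  have := abs_le.1 (hf.abs_deriv_lineSlope_sub_le hb.le hh ht)
  rw [hr] at this
  linarith [this.2]

end IsPSCBarrier

section Ray

variable {X : Set E} {x h : E}

theorem sigmaDist_nonneg : 0 ≤ sigmaDist X x h :=
  Real.sInf_nonneg (by rintro _ ⟨t, ht, -, rfl⟩; positivity)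

theorem sigmaDist_le_inv {t : ℝ} (ht : 0 < t) (hmem : x + t • h ∈ X) :
    sigmaDist X x h ≤ t⁻¹ :=
  csInf_le ⟨0, by rintro _ ⟨s, hs, -, rfl⟩; positivity⟩ ⟨t, ht, hmem, (one_div t).symm⟩

theorem le_sigmaDist {c : ℝ} (hne : ∃ t : ℝ, 0 < t ∧ x + t • h ∈ X)
    (hc : ∀ t : ℝ, 0 < t → x + t • h ∈ X → c ≤ t⁻¹) : c ≤ sigmaDist X x h := by
  obtain ⟨t, ht, hmem⟩ := hne
  refine le_csInf ⟨_, t, ht, hmem, rfl⟩ ?_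
  rintro _ ⟨s, hs, hmem, rfl⟩
  simpa using hc s hs hmem

theorem sigmaDist_eq_zero_of_forall_mem (hall : ∀ t : ℝ, 0 < t → x + t • h ∈ X) :
    sigmaDist X x h = 0 := by
  refine le_antisymm (le_of_forall_pos_le_add fun ε hε => ?_) sigmaDist_nonneg
  simpa using sigmaDist_le_inv (inv_pos.2 hε) (hall _ (inv_pos.2 hε))

theorem exists_pos_add_smul_mem_of_mem_interior (hx : x ∈ interior X) :
    ∃ t : ℝ, 0 < t ∧ x + t • h ∈ X := by
  have hcont : Continuous fun t : ℝ => x + t • h := by fun_prop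
  have hev : ∀ᶠ t in 𝓝 (0 : ℝ), x + t • h ∈ interior X :=
    hcont.continuousAt.eventually_mem (by simpa using isOpen_interior.mem_nhds hx)
  obtain ⟨t, ht, hmem⟩ := ((hev.filter_mono nhdsWithin_le_nhds).and
    (self_mem_nhdsWithin : Ioi (0 : ℝ) ∈ 𝓝[>] 0)).exists
  exact ⟨t, hmem, interior_subset ht⟩

theorem Convex.add_smul_mem_interior_of_mem {s t : ℝ} (hX : Convex ℝ X) (hx : x ∈ interior X)
    (hmem : x + t • h ∈ X) (hs : s ∈ Ico 0 t) : x + s • h ∈ interior X := by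
  have ht : 0 < t := hs.1.trans_lt hs.2
  have hμ : (t - s) / t ∈ Ioc (0 : ℝ) 1 :=
    ⟨div_pos (by linarith [hs.2]) ht, (div_le_one ht).2 (by linarith [hs.1])⟩
  have := hX.add_smul_sub_mem_interior' (subset_closure hmem) hx hμ
  convert this using 1
  rw [sub_add_cancel_left, smul_neg, smul_smul, ← sub_eq_add_neg, add_sub_assoc, ← sub_smul]
  congr 2
  field_simp
  ring

theorem exists_mem_frontier_of_not_mem_interior (hx : x ∈ interior X) {t₁ : ℝ} (ht₁ : 0 ≤ t₁)
    (hout : x + t₁ • h ∉ interior X) :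
    ∃ T : ℝ, 0 < T ∧ (∀ s ∈ Ico 0 T, x + s • h ∈ interior X) ∧ x + T • h ∈ frontier X := by
  have hcont : Continuous fun t : ℝ => x + t • h := by fun_prop
  set K := Icc 0 t₁ ∩ (fun t : ℝ => x + t • h) ⁻¹' (interior X)ᶜ
  have hK : IsClosed K := isClosed_Icc.inter (isOpen_interior.isClosed_compl.preimage hcont)
  have hTK : sInf K ∈ K := hK.csInf_mem ⟨t₁, ⟨ht₁, le_rfl⟩, hout⟩ ⟨0, fun t ht => ht.1.1⟩
  have hT : 0 < sInf K := hTK.1.1.lt_of_ne fun h0 => hTK.2 (by simpa [← h0] using hx)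
  have hbefore : ∀ s ∈ Ico 0 (sInf K), x + s • h ∈ interior X := fun s hs => by
    by_contra hout
    have hsK : s ∈ K := ⟨⟨hs.1, hs.2.le.trans hTK.1.2⟩, hout⟩
    exact (csInf_le ⟨0, fun t ht => ht.1.1⟩ hsK).not_gt hs.2
  refine ⟨sInf K, hT, hbefore, ?_, hTK.2⟩
  have hTcl : sInf K ∈ closure (Ico 0 (sInf K)) := by
    rw [closure_Ico hT.ne]
    exact ⟨hT.le, le_rfl⟩
  exact map_mem_closure (s := Ico 0 (sInf K)) hcont hTcl fun s hs => interior_subset (hbefore s hs)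

end Ray

namespace IsPSCBarrier

variable {X : Set E} {f : E → ℝ} {x h : E} {ν : ℝ}

theorem lineSlope_le_sigmaDist (hX : Convex ℝ X) (hν : 1 < ν)
    (hf : IsPSCBarrier X f ((ν - 2) / √(ν - 1))) (hx : x ∈ interior X) (hh : h ≠ 0) :
    lineSlope f x h (√(ν - 1))⁻¹ 0 ≤ sigmaDist X x h := by
  refine le_sigmaDist (exists_pos_add_smul_mem_of_mem_interior hx) fun t ht hmem => ?_
  have hray : ∀ s ∈ Ico 0 t, x + s • h ∈ interior X := fun s hs =>
    hX.add_smul_mem_interior_of_mem hx hmem hs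
  exact le_inv_of_sq_le_deriv ht
    (fun s hs => (hf.hasDerivAt_lineSlope hh (hray s hs)).differentiableAt)
    (fun s hs => hf.sq_lineSlope_le_deriv hν hh (hray s hs))

theorem sigmaDist_le_lineSlope (hX : IsClosed X) (hν : 1 < ν)
    (hf : IsPSCBarrier X f ((ν - 2) / √(ν - 1))) (hx : x ∈ interior X) (hh : h ≠ 0) :
    sigmaDist X x h ≤ max 0 (lineSlope f x h √(ν - 1) 0) := by
  by_cases hall : ∀ t : ℝ, 0 ≤ t → x + t • h ∈ interior X
  · rw [sigmaDist_eq_zero_of_forall_mem fun t ht => interior_subset (hall t ht.le)]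
    exact le_max_left _ _
  obtain ⟨t₁, ht₁, hout⟩ := not_forall₂.1 hall
  obtain ⟨T, hT, hray, hfr⟩ := exists_mem_frontier_of_not_mem_interior hx ht₁ hout
  have hdiff : ∀ s ∈ Ico 0 T, DifferentiableAt ℝ f (x + s • h) := fun s hs =>
    (hf.1.contDiffAt (isOpen_interior.mem_nhds (hray s hs))).differentiableAt (by norm_num)
  have hlim : Tendsto (fun s : ℝ => f (x + s • h)) (𝓝[<] T) atTop := by
    refine (hf.2.2.1 _ hfr).comp (tendsto_nhdsWithin_iff.2 ⟨?_, ?_⟩)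
    · exact ((by fun_prop : Continuous fun s : ℝ => x + s • h).tendsto T).mono_left
        nhdsWithin_le_nhds
    · filter_upwards [Ioo_mem_nhdsLT hT] with s hs using hray s (Ioo_subset_Ico_self hs)
  have hunb : ¬ BddAbove (lineSlope f x h √(ν - 1) '' Ico 0 T) := by
    rintro ⟨M, hM⟩
    refine not_bddAbove_deriv_of_tendsto_atTop hT
      (fun s hs => (hasDerivAt_comp_add_smul (hdiff s hs)).differentiableAt) hlim ⟨M, ?_⟩
    rintro _ ⟨s, hs, rfl⟩
    rw [(hasDerivAt_comp_add_smul (hdiff s hs)).deriv]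
    exact (le_add_of_nonneg_right (by positivity)).trans (hM ⟨s, hs, rfl⟩)
  calc sigmaDist X x h ≤ T⁻¹ := sigmaDist_le_inv hT (hX.frontier_subset hfr)
    _ ≤ lineSlope f x h √(ν - 1) 0 :=
      inv_le_of_deriv_le_sq hT
        (fun s hs => (hf.hasDerivAt_lineSlope hh (hray s hs)).differentiableAt)
        (fun s hs => hf.deriv_lineSlope_le_sq hν hh (hray s hs)) hunb
    _ ≤ max 0 _ := le_max_right _ _

end IsPSCBarrier

theorem stmt_9 {n : ℕ} (X : Set (EuclideanSpace ℝ (Fin n)))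
    (hX : IsRegularConvex X) (ν : ℝ) (hν : 2 ≤ ν)
    (f : EuclideanSpace ℝ (Fin n) → ℝ)
    (hf : IsPSCBarrier X f ((ν - 2)/Real.sqrt (ν - 1)))
    (x : EuclideanSpace ℝ (Fin n)) (hx : x ∈ interior X) :
    ∀ h : EuclideanSpace ℝ (Fin n),
      max 0 (fderiv ℝ f x h + Real.sqrt (affMetric f x h / (ν - 1))) ≤ sigmaDist X x h ∧
      sigmaDist X x h ≤ max 0 (fderiv ℝ f x h + Real.sqrt ((ν - 1) * affMetric f x h)) := by
  intro h
  obtain ⟨hXc, hXconv, -, -⟩ := hX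
  have hν1 : 1 < ν := by linarith
  have hν0 : 0 ≤ ν - 1 := by linarith
  rcases eq_or_ne h 0 with rfl | hh
  · have hσ : sigmaDist X x 0 = 0 :=
      sigmaDist_eq_zero_of_forall_mem fun t _ => by simpa using interior_subset hx
    simp [hσ, affMetric, ← Pi.zero_def]
  rw [Real.sqrt_div' _ hν0, Real.sqrt_mul hν0, div_eq_inv_mul, ← lineSlope_zero,
    ← lineSlope_zero]
  exact ⟨max_le sigmaDist_nonneg (hf.lineSlope_le_sigmaDist hXconv hν1 hx hh),
    hf.sigmaDist_le_lineSlope hXc hν1 hx hh⟩
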